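/- Let X_1,…,X_n be jointly distributed {±1}-valued random variables. Then for any ℓ ∈ [n], there exists a subset S ⊆ [n] with |S| ≤ ℓ such that E_{X_S} E_{{u,v} ∼ Unif([n] choose 2)} [Cov(X_u, X_v | X_S)²] ≤ 8 log(2) / ℓ, where the outer expectation is over the random value of X_S and the inner expectation is over a uniformly random unordered pair {u,v} of distinct indices. -/

import Mathlib

/-! The potential `Φ(S) = ∑ᵥ E[Var(X_v | X_S)]` lies in `[0, n]`. Revealing one more coordinate `u`
lowers it by at least `∑ᵥ E[Cov(X_u, X_v | X_S)²]`, because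
`Var(X_v | X_S) - E[Var(X_v | X_S, X_u) | X_S] = Cov(X_u, X_v | X_S)² / Var(X_u | X_S)` and
`Var(X_u | X_S) ≤ 1`. Greedily revealing the best coordinate `ℓ` times lowers `Φ` by at most `n`,
so some `S` along the way has `∑_{u,v} E[Cov(X_u, X_v | X_S)²] ≤ n² / ℓ`; averaging over the
`n (n - 1)` ordered pairs gives `2 / ℓ ≤ 8 log 2 / ℓ`. -/

open Finset

noncomputable section
open scoped Classical

/-- The ±1 value of a Boolean spin. -/
def spin (b : Bool) : ℝ := if b then 1 else -1

/-- A probability mass function on a finite type. -/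
def IsDist {Ω : Type*} [Fintype Ω] (μ : Ω → ℝ) : Prop :=
  (∀ x, 0 ≤ μ x) ∧ ∑ x, μ x = 1

/-- Marginal probability that the coordinates in `S` agree with `y`. -/
def marg {n : ℕ} (μ : (Fin n → Bool) → ℝ) (S : Finset (Fin n)) (y : Fin n → Bool) : ℝ :=
  ∑ x : Fin n → Bool, if ∀ i ∈ S, x i = y i then μ x else 0

/-- Canonical representatives of assignments to the coordinates in `S`. -/
def reps {n : ℕ} (S : Finset (Fin n)) : Finset (Fin n → Bool) :=
  Finset.univ.filter fun y => ∀ i ∉ S, y i = false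

/-- Conditional expectation `E[f(X) | X_S = y_S]`. -/
def condExp' {n : ℕ} (μ : (Fin n → Bool) → ℝ) (S : Finset (Fin n)) (y : Fin n → Bool)
    (f : (Fin n → Bool) → ℝ) : ℝ :=
  (∑ x : Fin n → Bool, if ∀ i ∈ S, x i = y i then μ x * f x else 0) / marg μ S y

/-- Conditional covariance `Cov(X_u, X_v | X_S = y_S)`. -/
def condCov {n : ℕ} (μ : (Fin n → Bool) → ℝ) (S : Finset (Fin n)) (y : Fin n → Bool)
    (u v : Fin n) : ℝ :=
  condExp' μ S y (fun x => spin (x u) * spin (x v))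
    - condExp' μ S y (fun x => spin (x u)) * condExp' μ S y (fun x => spin (x v))

/-- The ordered representatives of unordered pairs of distinct indices. -/
def pairs (n : ℕ) : Finset (Fin n × Fin n) :=
  Finset.univ.filter fun p => p.1 < p.2

theorem exists_card_lt_le_div_of_forall_exists_insert {α : Type*} [DecidableEq α]
    (W D : Finset α → ℝ) (B : ℝ) (hW : ∀ S, 0 ≤ W S) (hB : W ∅ ≤ B)
    (hstep : ∀ S, ∃ u, W (insert u S) + D S ≤ W S) {ℓ : ℕ} (hℓ : 0 < ℓ) :
    ∃ S : Finset α, S.card < ℓ ∧ D S ≤ B / ℓ := by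
  choose next hnext using hstep
  let greedy : ℕ → Finset α := fun k => Nat.rec ∅ (fun _ S => insert (next S) S) k
  have hcard (k : ℕ) : (greedy k).card ≤ k := by
    induction k with
    | zero => simp [greedy]
    | succ k ih => exact (card_insert_le _ _).trans (Nat.succ_le_succ ih)
  have htelescope (k : ℕ) : W (greedy k) + ∑ i ∈ range k, D (greedy i) ≤ W ∅ := by
    induction k with
    | zero => simp [greedy]
    | succ k ih => rw [sum_range_succ]; linarith [hnext (greedy k)]
  obtain ⟨i, hi, hle⟩ := exists_le_of_sum_le (nonempty_range_iff.2 hℓ.ne')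
    (f := fun i => D (greedy i)) (g := fun _ => B / ℓ) (by
      rw [sum_const, card_range, nsmul_eq_mul, mul_div_cancel₀ _ (by positivity)]
      linarith [htelescope ℓ, hW (greedy ℓ)])
  exact ⟨greedy i, (hcard i).trans_lt (mem_range.1 hi), hle⟩

theorem two_mul_sum_pairs_le {n : ℕ} (t : Fin n → Fin n → ℝ) (ht : ∀ u v, 0 ≤ t u v)
    (hsymm : ∀ u v, t u v = t v u) :
    2 * ∑ p ∈ pairs n, t p.1 p.2 ≤ ∑ u, ∑ v, t u v := by
  have hswap : ∑ p ∈ pairs n, t p.1 p.2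
      = ∑ p ∈ univ.filter fun p : Fin n × Fin n => p.2 < p.1, t p.1 p.2 :=
    sum_nbij' Prod.swap Prod.swap (by simp [pairs]) (by simp [pairs]) (by simp) (by simp)
      (fun p _ => hsymm _ _)
  rw [← sum_product', two_mul]
  nth_rewrite 2 [hswap]
  rw [pairs, ← sum_union (disjoint_filter.2 fun p _ h => lt_asymm h)]
  exact sum_le_univ_sum_of_nonneg fun p => ht _ _

/- In a cell of mass `a + b`, `a` and `b` are the masses of `X_u = 1` and `X_u = -1`, and `c`, `d`
the corresponding sums of `X_v`: the inequality reads
`(a + b) Cov(X_u, X_v)² ≤ (a + b) Var(X_v) - (a Var(X_v | X_u = 1) + b Var(X_v | X_u = -1))`. -/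
theorem mul_sq_cov_le {a b c d : ℝ} (hc : |c| ≤ a) (hd : |d| ≤ b) :
    (a + b) * ((c - d) / (a + b) - (a - b) / (a + b) * ((c + d) / (a + b))) ^ 2
      ≤ (a + b) * (1 - ((c + d) / (a + b)) ^ 2)
        - (a * (1 - (c / a) ^ 2) + b * (1 - (d / b) ^ 2)) := by
  rcases (abs_nonneg c).trans hc |>.eq_or_lt with rfl | ha
  · obtain rfl : c = 0 := abs_nonpos_iff.1 hc
    rcases eq_or_ne b 0 with rfl | hb <;> simp [neg_div, *]
  rcases (abs_nonneg d).trans hd |>.eq_or_lt with rfl | hb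
  · obtain rfl : d = 0 := abs_nonpos_iff.1 hd
    simp [ha.ne']
  rw [← sub_nonneg]
  have key : (a + b) * (1 - ((c + d) / (a + b)) ^ 2)
      - (a * (1 - (c / a) ^ 2) + b * (1 - (d / b) ^ 2)) - (a + b) * ((c - d) / (a + b) - (a - b) / (a + b) * ((c + d) / (a + b))) ^ 2
      = ((c * b - d * a) * (a - b)) ^ 2 / (a * b * (a + b) ^ 3) := by
    field_simp
    ring
  rw [key]
  positivity

theorem div_choose_two_le {n ℓ : ℕ} {P T : ℝ} (hn : 2 ≤ n) (hℓ : 1 ≤ ℓ) (hP : 2 * P ≤ T)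
    (hT : T / n ≤ n / ℓ) : P / n.choose 2 ≤ 2 / ℓ := by
  have hn' : (2 : ℝ) ≤ n := by exact_mod_cast hn
  have hℓ' : (1 : ℝ) ≤ ℓ := by exact_mod_cast hℓ
  rw [Nat.cast_choose_two]
  calc P / (n * (n - 1) / 2) = 2 * P / n / (n - 1) := by
        rw [div_div_eq_mul_div, div_div, mul_comm _ (2 : ℝ)]
    _ ≤ T / n / (n - 1) := by gcongr; linarith
    _ ≤ n / ℓ / (n - 1) := by gcongr; linarith
    _ = n / (n - 1) / ℓ := by ring
    _ ≤ 2 / ℓ := by gcongr; rw [div_le_iff₀ (by linarith)]; linarith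

def condSum {n : ℕ} (μ : (Fin n → Bool) → ℝ) (S : Finset (Fin n)) (y : Fin n → Bool)
    (f : (Fin n → Bool) → ℝ) : ℝ :=
  ∑ x : Fin n → Bool, if ∀ i ∈ S, x i = y i then μ x * f x else 0

section condSum

variable {n : ℕ} {μ : (Fin n → Bool) → ℝ} {S : Finset (Fin n)} {y : Fin n → Bool}
  {u v : Fin n}

theorem condExp'_eq_condSum_div (f : (Fin n → Bool) → ℝ) :
    condExp' μ S y f = condSum μ S y f / marg μ S y := rfl

theorem condSum_one : condSum μ S y (fun _ => 1) = marg μ S y := by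
  simp [condSum, marg]

theorem abs_condSum_le (hμ : ∀ x, 0 ≤ μ x) {f : (Fin n → Bool) → ℝ} (hf : ∀ x, |f x| ≤ 1) :
    |condSum μ S y f| ≤ marg μ S y := by
  refine (abs_sum_le_sum_abs _ _).trans (sum_le_sum fun x _ => ?_)
  split_ifs
  · rw [abs_mul, abs_of_nonneg (hμ x)]
    exact mul_le_of_le_one_right (hμ x) (hf x)
  · simp

theorem marg_nonneg (hμ : ∀ x, 0 ≤ μ x) : 0 ≤ marg μ S y :=
  sum_nonneg fun x _ => by split_ifs; exacts [hμ x, le_rfl]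

theorem abs_spin_le_one (b : Bool) : |spin b| ≤ 1 := by
  cases b <;> simp [spin]

theorem condExp'_spin_sq_le_one (hμ : ∀ x, 0 ≤ μ x) :
    condExp' μ S y (fun x => spin (x v)) ^ 2 ≤ 1 := by
  rw [sq_le_one_iff_abs_le_one, condExp'_eq_condSum_div, abs_div, abs_of_nonneg (marg_nonneg hμ)]
  exact div_le_one_of_le₀ (abs_condSum_le hμ fun x => abs_spin_le_one _) (marg_nonneg hμ)

theorem forall_mem_insert_eq_update_iff (hu : u ∉ S) (b : Bool) (x : Fin n → Bool) :
    (∀ i ∈ insert u S, x i = Function.update y u b i) ↔ x u = b ∧ ∀ i ∈ S, x i = y i := by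
  rw [forall_mem_insert, Function.update_self]
  refine and_congr Iff.rfl (forall₂_congr fun i hi => ?_)
  rw [Function.update_of_ne (ne_of_mem_of_not_mem hi hu)]

theorem condSum_eq_add_insert (hu : u ∉ S) (f : (Fin n → Bool) → ℝ) :
    condSum μ S y f = condSum μ (insert u S) (Function.update y u true) f
      + condSum μ (insert u S) (Function.update y u false) f := by
  simp only [condSum, ← sum_add_distrib, forall_mem_insert_eq_update_iff hu]
  refine sum_congr rfl fun x _ => ?_
  cases x u <;> simp

theorem condSum_spin_mul_eq_sub_insert (hu : u ∉ S) (f : (Fin n → Bool) → ℝ) :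
    condSum μ S y (fun x => spin (x u) * f x)
      = condSum μ (insert u S) (Function.update y u true) f
        - condSum μ (insert u S) (Function.update y u false) f := by
  simp only [condSum, ← sum_sub_distrib, forall_mem_insert_eq_update_iff hu]
  refine sum_congr rfl fun x _ => ?_
  by_cases h : ∀ i ∈ S, x i = y i
  · cases x u <;> simp [spin, eq_true h]
  · simp [h]

theorem condSum_spin_mul_of_mem (hu : u ∈ S) (f : (Fin n → Bool) → ℝ) :
    condSum μ S y (fun x => spin (x u) * f x) = spin (y u) * condSum μ S y f := by
  rw [condSum, condSum, mul_sum]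
  refine sum_congr rfl fun x _ => ?_
  split_ifs with h
  · rw [h u hu]; ring
  · rw [mul_zero]

theorem condCov_eq_zero_of_mem (hu : u ∈ S) : condCov μ S y u v = 0 := by
  have hsu : condSum μ S y (fun x => spin (x u)) = spin (y u) * marg μ S y := by
    simpa [condSum_one] using condSum_spin_mul_of_mem (μ := μ) (y := y) hu fun _ => 1
  rcases eq_or_ne (marg μ S y) 0 with h | h
  · simp [condCov, condExp'_eq_condSum_div, h]
  · simp only [condCov, condExp'_eq_condSum_div, condSum_spin_mul_of_mem hu, hsu]
    field_simp
    ring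

end condSum

section reps

variable {n : ℕ} {μ : (Fin n → Bool) → ℝ} {S : Finset (Fin n)} {u : Fin n}

theorem reps_empty : reps (∅ : Finset (Fin n)) = {fun _ => false} := by
  ext y
  simp [reps, funext_iff]

theorem mem_reps {y : Fin n → Bool} : y ∈ reps S ↔ ∀ i ∉ S, y i = false := by
  simp [reps]

theorem sum_reps_insert (hu : u ∉ S) (g : (Fin n → Bool) → ℝ) :
    ∑ y ∈ reps (insert u S), g y = ∑ y ∈ reps S, ∑ b : Bool, g (Function.update y u b) := by
  rw [← sum_product']
  refine sum_nbij' (fun y => (Function.update y u false, y u))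
    (fun p => Function.update p.1 u p.2) (fun y hy => ?_) (fun p hp => ?_) (by simp) (fun p hp => ?_)
    (by simp)
  · simp only [mem_product, mem_univ, and_true, mem_reps, mem_insert, not_or] at hy ⊢
    intro i hi
    rcases eq_or_ne i u with rfl | hne
    · simp
    · simp [hne, hy i ⟨hne, hi⟩]
  · simp only [mem_product, mem_univ, and_true, mem_reps, mem_insert, not_or] at hp ⊢
    intro i hi
    simp [hi.1, hp i hi.2]
  · rw [mem_product, mem_reps] at hp
    ext : 1
    · simp [← hp.1 u hu]
    · simp

theorem sum_reps_condSum (f : (Fin n → Bool) → ℝ) :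
    ∑ y ∈ reps S, condSum μ S y f = ∑ x, μ x * f x := by
  induction S using Finset.induction_on with
  | empty => simp [reps_empty, condSum]
  | insert u S hu ih => simp [sum_reps_insert hu, ← condSum_eq_add_insert hu, ih]

end reps

def expCondVar {n : ℕ} (μ : (Fin n → Bool) → ℝ) (S : Finset (Fin n)) (v : Fin n) : ℝ :=
  ∑ y ∈ reps S, marg μ S y * (1 - condExp' μ S y (fun x => spin (x v)) ^ 2)

def expSqCondCov {n : ℕ} (μ : (Fin n → Bool) → ℝ) (S : Finset (Fin n)) (u v : Fin n) : ℝ :=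
  ∑ y ∈ reps S, marg μ S y * condCov μ S y u v ^ 2

section potential

variable {n : ℕ} {μ : (Fin n → Bool) → ℝ}

theorem expCondVar_nonneg (hμ : ∀ x, 0 ≤ μ x) (S : Finset (Fin n)) (v : Fin n) :
    0 ≤ expCondVar μ S v :=
  sum_nonneg fun _ _ => mul_nonneg (marg_nonneg hμ) (sub_nonneg.2 (condExp'_spin_sq_le_one hμ))

theorem expCondVar_le_one (hμ : IsDist μ) (S : Finset (Fin n)) (v : Fin n) :
    expCondVar μ S v ≤ 1 :=
  calc expCondVar μ S v ≤ ∑ y ∈ reps S, marg μ S y :=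
        sum_le_sum fun _ _ => mul_le_of_le_one_right (marg_nonneg hμ.1)
          (sub_le_self _ (sq_nonneg _))
    _ = 1 := by simp [← condSum_one, sum_reps_condSum, hμ.2]

theorem expSqCondCov_nonneg (hμ : ∀ x, 0 ≤ μ x) (S : Finset (Fin n)) (u v : Fin n) :
    0 ≤ expSqCondCov μ S u v :=
  sum_nonneg fun _ _ => mul_nonneg (marg_nonneg hμ) (sq_nonneg _)

theorem condCov_comm (S : Finset (Fin n)) (y : Fin n → Bool) (u v : Fin n) :
    condCov μ S y u v = condCov μ S y v u := by
  simp only [condCov, mul_comm]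

theorem sum_marg_mul_sum_pairs_div_eq (S : Finset (Fin n)) (c : ℝ) :
    ∑ y ∈ reps S, marg μ S y * ((∑ p ∈ pairs n, condCov μ S y p.1 p.2 ^ 2) / c)
      = (∑ p ∈ pairs n, expSqCondCov μ S p.1 p.2) / c := by
  simp only [mul_div_assoc', ← sum_div, mul_sum, expSqCondCov]
  rw [sum_comm]

theorem marg_mul_sq_condCov_le {S : Finset (Fin n)} {u : Fin n} (hμ : ∀ x, 0 ≤ μ x) (hu : u ∉ S)
    (y : Fin n → Bool) (v : Fin n) :
    marg μ S y * condCov μ S y u v ^ 2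
      ≤ marg μ S y * (1 - condExp' μ S y (fun x => spin (x v)) ^ 2)
        - ∑ b : Bool, marg μ (insert u S) (Function.update y u b)
            * (1 - condExp' μ (insert u S) (Function.update y u b) (fun x => spin (x v)) ^ 2) := by
  have hm : marg μ S y = marg μ (insert u S) (Function.update y u true)
      + marg μ (insert u S) (Function.update y u false) := by
    simp only [← condSum_one, condSum_eq_add_insert hu]
  have hsu : condSum μ S y (fun x => spin (x u)) = marg μ (insert u S) (Function.update y u true)
      - marg μ (insert u S) (Function.update y u false) := by
    simpa [condSum_one] using condSum_spin_mul_eq_sub_insert (μ := μ) (y := y) hu fun _ => 1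
  rw [condCov, condExp'_eq_condSum_div, condExp'_eq_condSum_div, condExp'_eq_condSum_div,
    condSum_spin_mul_eq_sub_insert hu, hsu, condSum_eq_add_insert hu, hm, Fintype.sum_bool]
  exact mul_sq_cov_le (abs_condSum_le hμ fun _ => abs_spin_le_one _)
    (abs_condSum_le hμ fun _ => abs_spin_le_one _)

theorem expSqCondCov_le_expCondVar_sub (hμ : ∀ x, 0 ≤ μ x) (S : Finset (Fin n)) (u v : Fin n) :
    expSqCondCov μ S u v ≤ expCondVar μ S v - expCondVar μ (insert u S) v := by
  by_cases hu : u ∈ S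
  · simp [expSqCondCov, insert_eq_of_mem hu, condCov_eq_zero_of_mem hu]
  · rw [expCondVar, expCondVar, sum_reps_insert hu, ← sum_sub_distrib]
    exact sum_le_sum fun y _ => marg_mul_sq_condCov_le hμ hu y v

theorem exists_sum_expCondVar_insert_add_le (hμ : ∀ x, 0 ≤ μ x) (hn : 0 < n)
    (S : Finset (Fin n)) :
    ∃ u, ∑ v, expCondVar μ (insert u S) v + (∑ u, ∑ v, expSqCondCov μ S u v) / n
      ≤ ∑ v, expCondVar μ S v := by
  have hdrop (u : Fin n) :
      ∑ v, expCondVar μ (insert u S) v + ∑ v, expSqCondCov μ S u v ≤ ∑ v, expCondVar μ S v := by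
    rw [← sum_add_distrib]
    exact sum_le_sum fun v _ => by linarith [expSqCondCov_le_expCondVar_sub hμ S u v]
  obtain ⟨u, -, hu⟩ := exists_le_of_sum_le (univ_nonempty_iff.2 ⟨⟨0, hn⟩⟩)
    (f := fun u => ∑ v, expCondVar μ (insert u S) v + (∑ u, ∑ v, expSqCondCov μ S u v) / n)
    (g := fun _ => ∑ v, expCondVar μ S v) (by
      simp only [sum_add_distrib, sum_const, card_univ, Fintype.card_fin, nsmul_eq_mul]
      rw [mul_div_cancel₀ _ (by positivity), ← sum_add_distrib]
      simpa using sum_le_sum fun u (_ : u ∈ univ) => hdrop u)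
  exact ⟨u, hu⟩

end potential

theorem covariance_correlation_rounding_general {n : ℕ} (μ : (Fin n → Bool) → ℝ) (hμ : IsDist μ)
    (ℓ : ℕ) (hl1 : 1 ≤ ℓ) :
    ∃ S : Finset (Fin n), S.card ≤ ℓ ∧
      (∑ y ∈ reps S, marg μ S y *
          ((∑ p ∈ pairs n, (condCov μ S y p.1 p.2) ^ 2) / (n.choose 2 : ℝ)))
        ≤ 8 * Real.log 2 / (ℓ : ℝ) := by
  rcases lt_or_ge n 2 with hn | hn
  · exact ⟨∅, by simp, by
    simp only [Nat.choose_eq_zero_of_lt hn, Nat.cast_zero, div_zero, mul_zero, sum_const_zero]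
    positivity⟩
  obtain ⟨S, hS, hT⟩ := exists_card_lt_le_div_of_forall_exists_insert
    (fun S => ∑ v, expCondVar μ S v) (fun S => (∑ u, ∑ v, expSqCondCov μ S u v) / n) n
    (fun S => sum_nonneg fun v _ => expCondVar_nonneg hμ.1 S v)
    (by simpa using sum_le_sum fun v (_ : v ∈ univ) => expCondVar_le_one hμ ∅ v)
    (exists_sum_expCondVar_insert_add_le hμ.1 (by omega)) hl1
  refine ⟨S, hS.le, ?_⟩
  rw [sum_marg_mul_sum_pairs_div_eq]
  have hpairs := two_mul_sum_pairs_le (expSqCondCov μ S) (expSqCondCov_nonneg hμ.1 S)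
    fun u v => by simp only [expSqCondCov, condCov_comm S _ u v]
  calc (∑ p ∈ pairs n, expSqCondCov μ S p.1 p.2) / n.choose 2 ≤ 2 / ℓ :=
        div_choose_two_le hn hl1 hpairs hT
    _ ≤ 8 * Real.log 2 / ℓ := by gcongr; linarith [Real.log_two_gt_d9]

/-- Covariance version of correlation rounding: for any `ℓ ∈ [n]` there is `S` with `|S| ≤ ℓ`
such that `E_{X_S} E_{{u,v}}[Cov(X_u,X_v|X_S)²] ≤ 8 log 2 / ℓ`. -/
theorem covariance_correlation_rounding {n : ℕ} (μ : (Fin n → Bool) → ℝ) (hμ : IsDist μ)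
    (ℓ : ℕ) (hl1 : 1 ≤ ℓ) (hln : ℓ ≤ n) :
    ∃ S : Finset (Fin n), S.card ≤ ℓ ∧
      (∑ y ∈ reps S, marg μ S y *
          ((∑ p ∈ pairs n, (condCov μ S y p.1 p.2) ^ 2) / (n.choose 2 : ℝ)))
        ≤ 8 * Real.log 2 / (ℓ : ℝ) :=
  covariance_correlation_rounding_general μ hμ ℓ hl1

end
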